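/- arXiv:2503.12818 — 6 statements merged into one kernel-verified Lean document; each statement's English description precedes it below -/
import Mathlib

section
/- There exists a unique function v* : S → ℝ satisfying the Bellman optimality equation v* s = max_{a ∈ A} (r s a + γ * ∑_{s'} P s a s' * v* s') for all s ∈ S. -/
/-!
The Bellman operator `T v s = max_a (r s a + γ * ∑ s', P s a s' * v s')` is a `γ`-contraction of
`S → ℝ` with the sup metric: a maximum moves by at most the largest move of its arguments, and
averaging against the probability vector `P s a` does not increase sup distances. Banach's fixed
point theorem then gives exactly one solution.
-/

open Finset

namespace Finset

variable {ι α : Type*} [AddCommGroup α] [LinearOrder α] [IsOrderedAddMonoid α]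
  {s : Finset ι} (hs : s.Nonempty) {f g : ι → α} {c : α}

theorem sup'_le_sup'_add (h : ∀ i ∈ s, f i ≤ g i + c) : s.sup' hs f ≤ s.sup' hs g + c :=
  sup'_le hs f fun i hi => (h i hi).trans (add_le_add_left (le_sup' g hi) c)

theorem abs_sup'_sub_sup'_le (h : ∀ i ∈ s, |f i - g i| ≤ c) :
    |s.sup' hs f - s.sup' hs g| ≤ c := by
  rw [abs_sub_le_iff, sub_le_iff_le_add', sub_le_iff_le_add']
  constructor
  · exact sup'_le_sup'_add hs fun i hi => sub_le_iff_le_add'.1 (abs_sub_le_iff.1 (h i hi)).1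
  · exact sup'_le_sup'_add hs fun i hi => sub_le_iff_le_add'.1 (abs_sub_le_iff.1 (h i hi)).2

end Finset

theorem dist_sum_mul_sum_mul_le_of_stochastic {ι : Type*} [Fintype ι] {p : ι → ℝ}
    (hp0 : ∀ i, 0 ≤ p i) (hp1 : ∑ i, p i = 1) (v w : ι → ℝ) :
    dist (∑ i, p i * v i) (∑ i, p i * w i) ≤ dist v w := by
  rw [Real.dist_eq, ← sum_sub_distrib]
  calc |∑ i, (p i * v i - p i * w i)|
      ≤ ∑ i, |p i * (v i - w i)| := by simpa only [mul_sub] using abs_sum_le_sum_abs _ _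
    _ = ∑ i, p i * dist (v i) (w i) := by
      simp only [abs_mul, abs_of_nonneg (hp0 _), Real.dist_eq]
    _ ≤ ∑ i, p i * dist v w :=
      sum_le_sum fun i _ => mul_le_mul_of_nonneg_left (dist_le_pi_dist v w i) (hp0 i)
    _ = dist v w := by rw [← sum_mul, hp1, one_mul]

section Bellman

variable {S A : Type*} [Fintype S] [Fintype A] [Nonempty A]

noncomputable def bellmanOperator (P : S → A → S → ℝ) (r : S → A → ℝ) (γ : ℝ) (v : S → ℝ) :
    S → ℝ :=
  fun s => univ.sup' univ_nonempty fun a => r s a + γ * ∑ s', P s a s' * v s'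

variable {P : S → A → S → ℝ} (hP0 : ∀ s a s', 0 ≤ P s a s') (hP1 : ∀ s a, ∑ s', P s a s' = 1)
  (r : S → A → ℝ) {γ : ℝ}
include hP0 hP1

theorem dist_bellmanOperator_le (hγ : 0 ≤ γ) (v w : S → ℝ) :
    dist (bellmanOperator P r γ v) (bellmanOperator P r γ w) ≤ γ * dist v w := by
  refine (dist_pi_le_iff (by positivity)).2 fun s => ?_
  refine abs_sup'_sub_sup'_le _ fun a _ => ?_
  rw [add_sub_add_left_eq_sub, ← mul_sub, abs_mul, abs_of_nonneg hγ]
  exact mul_le_mul_of_nonneg_left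
    (dist_sum_mul_sum_mul_le_of_stochastic (hP0 s a) (hP1 s a) v w) hγ

theorem contractingWith_bellmanOperator (hγ0 : 0 ≤ γ) (hγ1 : γ < 1) :
    ContractingWith γ.toNNReal (bellmanOperator P r γ) :=
  ⟨Real.toNNReal_lt_one.2 hγ1, LipschitzWith.of_dist_le_mul fun v w => by
    rw [Real.coe_toNNReal γ hγ0]
    exact dist_bellmanOperator_le hP0 hP1 r hγ0 v w⟩

end Bellman

theorem bellman_optimality_exists_unique_general
    {S A : Type*} [Fintype S] [Fintype A] [Nonempty A]
    (P : S → A → S → ℝ) (hP0 : ∀ s a s', 0 ≤ P s a s')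
    (hP1 : ∀ s a, ∑ s', P s a s' = 1)
    (r : S → A → ℝ) (γ : ℝ) (hγ0 : 0 < γ) (hγ1 : γ < 1) :
    ∃! v : S → ℝ, ∀ s, v s = Finset.univ.sup' Finset.univ_nonempty
      (fun a => r s a + γ * ∑ s', P s a s' * v s') := by
  have hT := contractingWith_bellmanOperator hP0 hP1 r hγ0.le hγ1
  refine ⟨hT.fixedPoint, fun s => (congrFun hT.fixedPoint_isFixedPt s).symm, fun w hw => ?_⟩
  exact hT.fixedPoint_unique (funext fun s => (hw s).symm)

/-- There exists a unique solution of the Bellman optimality equation. -/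
theorem bellman_optimality_exists_unique
    {S A : Type*} [Fintype S] [Nonempty S] [Fintype A] [Nonempty A]
    (P : S → A → S → ℝ) (hP0 : ∀ s a s', 0 ≤ P s a s')
    (hP1 : ∀ s a, ∑ s', P s a s' = 1)
    (r : S → A → ℝ) (γ : ℝ) (hγ0 : 0 < γ) (hγ1 : γ < 1) :
    ∃! v : S → ℝ, ∀ s, v s = Finset.univ.sup' Finset.univ_nonempty
      (fun a => r s a + γ * ∑ s', P s a s' * v s') :=
  bellman_optimality_exists_unique_general P hP0 hP1 r γ hγ0 hγ1
end

section
/- (Policy improvement, Lemma 1.) Let π, π' : S → A be deterministic policies with value functions v_π and v_{π'} (the solutions of their respective Bellman expectation equations). If π' is greedy with respect to q_π, i.e., for every state s, q_π(s, π' s) = max_{a ∈ A} q_π(s, a), where q_π(s, a) = r s a + γ * ∑_{s'} P s a s' * v_π s', then v_π s ≤ v_{π'} s for every state s ∈ S. -/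
/-!
Let `g = v_π - v_{π'}`. Greedy choice gives `v_π s ≤ q_π(s, π' s)`, and subtracting the Bellman
equation of `π'` yields `g s ≤ γ * ∑ s', P s (π' s) s' * g s'`. At a state where `g` is maximal the
right-hand side is at most `γ * max g`, so `max g ≤ γ * max g` and hence `max g ≤ 0`.
-/

open Finset

/-- For `v = v_π` this is the paper's `q_π`. -/
def qValue {S A : Type*} [Fintype S] (P : S → A → S → ℝ) (r : S → A → ℝ) (γ : ℝ)
    (v : S → ℝ) (s : S) (a : A) : ℝ :=
  r s a + γ * ∑ s', P s a s' * v s'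

theorem qValue_sub_qValue {S A : Type*} [Fintype S] (P : S → A → S → ℝ) (r : S → A → ℝ)
    (γ : ℝ) (v w : S → ℝ) (s : S) (a : A) :
    qValue P r γ v s a - qValue P r γ w s a = γ * ∑ s', P s a s' * (v s' - w s') := by
  simp only [qValue, mul_sub, sum_sub_distrib]
  ring

theorem sum_mul_le_of_stochastic {S : Type*} [Fintype S] {p g : S → ℝ} (hp0 : ∀ s, 0 ≤ p s)
    (hp1 : ∑ s, p s = 1) {M : ℝ} (hg : ∀ s, g s ≤ M) : ∑ s, p s * g s ≤ M :=
  calc ∑ s, p s * g s ≤ ∑ s, p s * M :=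
        sum_le_sum fun s _ => mul_le_mul_of_nonneg_left (hg s) (hp0 s)
    _ = M := by rw [← sum_mul, hp1, one_mul]

theorem nonpos_of_le_discounted_mean {S : Type*} [Fintype S] (Q : S → S → ℝ)
    (hQ0 : ∀ s s', 0 ≤ Q s s') (hQ1 : ∀ s, ∑ s', Q s s' = 1) {γ : ℝ} (hγ0 : 0 ≤ γ)
    (hγ1 : γ < 1) {g : S → ℝ} (hg : ∀ s, g s ≤ γ * ∑ s', Q s s' * g s') (s : S) : g s ≤ 0 := by
  have : Nonempty S := ⟨s⟩
  obtain ⟨s₀, hs₀⟩ := Finite.exists_max g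
  have hmax : g s₀ ≤ γ * g s₀ :=
    (hg s₀).trans <|
      mul_le_mul_of_nonneg_left (sum_mul_le_of_stochastic (hQ0 s₀) (hQ1 s₀) hs₀) hγ0
  nlinarith [hs₀ s]

theorem policy_improvement_general
    {S A : Type*} [Fintype S] [Fintype A] [Nonempty A]
    (P : S → A → S → ℝ) (hP0 : ∀ s a s', 0 ≤ P s a s')
    (hP1 : ∀ s a, ∑ s', P s a s' = 1)
    (r : S → A → ℝ) (γ : ℝ) (hγ0 : 0 < γ) (hγ1 : γ < 1)
    (π π' : S → A) (vπ vπ' : S → ℝ)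
    (hv : ∀ s, vπ s = r s (π s) + γ * ∑ s', P s (π s) s' * vπ s')
    (hv' : ∀ s, vπ' s = r s (π' s) + γ * ∑ s', P s (π' s) s' * vπ' s')
    (hgreedy : ∀ s, r s (π' s) + γ * ∑ s', P s (π' s) s' * vπ s'
        = Finset.univ.sup' Finset.univ_nonempty
            (fun a => r s a + γ * ∑ s', P s a s' * vπ s')) :
    ∀ s, vπ s ≤ vπ' s := by
  have hstep : ∀ s, vπ s - vπ' s ≤ γ * ∑ s', P s (π' s) s' * (vπ s' - vπ' s') := by
    intro s
    have hgreedy_le : vπ s ≤ qValue P r γ vπ s (π' s) :=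
      (hv s).trans_le <| (le_sup' (qValue P r γ vπ s) (mem_univ (π s))).trans_eq (hgreedy s).symm
    rw [← qValue_sub_qValue, hv' s]
    exact sub_le_sub_right hgreedy_le _
  intro s
  exact sub_nonpos.1 <|
    nonpos_of_le_discounted_mean (fun s => P s (π' s)) (fun s => hP0 s (π' s))
      (fun s => hP1 s (π' s)) hγ0.le hγ1 hstep s

/-- Policy improvement (Lemma 1): if `π'` is greedy with respect to `q_π`,
then `v_π ≤ v_{π'}` pointwise. -/
theorem policy_improvement
    {S A : Type*} [Fintype S] [Nonempty S] [Fintype A] [Nonempty A]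
    (P : S → A → S → ℝ) (hP0 : ∀ s a s', 0 ≤ P s a s')
    (hP1 : ∀ s a, ∑ s', P s a s' = 1)
    (r : S → A → ℝ) (γ : ℝ) (hγ0 : 0 < γ) (hγ1 : γ < 1)
    (π π' : S → A) (vπ vπ' : S → ℝ)
    (hv : ∀ s, vπ s = r s (π s) + γ * ∑ s', P s (π s) s' * vπ s')
    (hv' : ∀ s, vπ' s = r s (π' s) + γ * ∑ s', P s (π' s) s' * vπ' s')
    (hgreedy : ∀ s, r s (π' s) + γ * ∑ s', P s (π' s) s' * vπ s'
        = Finset.univ.sup' Finset.univ_nonempty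
            (fun a => r s a + γ * ∑ s', P s a s' * vπ s')) :
    ∀ s, vπ s ≤ vπ' s :=
  policy_improvement_general P hP0 hP1 r γ hγ0 hγ1 π π' vπ vπ' hv hv' hgreedy
end

section
/- If the value function v_π of a deterministic policy π : S → A satisfies the Bellman optimality equation v_π s = max_{a ∈ A} (r s a + γ * ∑_{s'} P s a s' * v_π s') for all s ∈ S, then π is optimal among all deterministic policies: for every deterministic policy σ : S → A with value function v_σ and every state s ∈ S, v_σ s ≤ v_π s. -/
/-!
Write `d = v_σ - v_π`. Optimality of `v_π` gives `v_π s ≥ r s (σ s) + γ 𝔼[v_π]` under `P s (σ s)`,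
so `d s ≤ γ 𝔼[d]` at every state. At a state where `d` is maximal this reads `max d ≤ γ max d`,
which forces `max d ≤ 0` because `γ < 1`.
-/

open Finset

section Comparison

variable {S : Type*} [Fintype S] {Q : S → S → ℝ} {γ : ℝ}

theorem nonpos_of_le_discount_mul_expectation (hQ0 : ∀ s s', 0 ≤ Q s s')
    (hQ1 : ∀ s, ∑ s', Q s s' = 1) (hγ0 : 0 ≤ γ) (hγ1 : γ < 1) {d : S → ℝ}
    (hd : ∀ s, d s ≤ γ * ∑ s', Q s s' * d s') (s : S) : d s ≤ 0 := by
  have : Nonempty S := ⟨s⟩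
  obtain ⟨s₀, hs₀⟩ := Finite.exists_max d
  have hexp : ∑ s', Q s₀ s' * d s' ≤ d s₀ :=
    calc ∑ s', Q s₀ s' * d s' ≤ ∑ s', Q s₀ s' * d s₀ :=
          sum_le_sum fun s' _ => mul_le_mul_of_nonneg_left (hs₀ s') (hQ0 s₀ s')
      _ = d s₀ := by rw [← sum_mul, hQ1, one_mul]
  have hmax : d s₀ ≤ γ * d s₀ := (hd s₀).trans (mul_le_mul_of_nonneg_left hexp hγ0)
  nlinarith [hs₀ s]

theorem le_of_subsolution_of_supersolution (hQ0 : ∀ s s', 0 ≤ Q s s')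
    (hQ1 : ∀ s, ∑ s', Q s s' = 1) (hγ0 : 0 ≤ γ) (hγ1 : γ < 1) {c u w : S → ℝ}
    (hu : ∀ s, u s ≤ c s + γ * ∑ s', Q s s' * u s')
    (hw : ∀ s, c s + γ * ∑ s', Q s s' * w s' ≤ w s) (s : S) : u s ≤ w s := by
  have hd : ∀ s, u s - w s ≤ γ * ∑ s', Q s s' * (u s' - w s') := fun s => by
    simp only [mul_sub, sum_sub_distrib]
    linarith [hu s, hw s]
  exact sub_nonpos.mp (nonpos_of_le_discount_mul_expectation hQ0 hQ1 hγ0 hγ1 hd s)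

end Comparison

theorem bellman_optimal_implies_policy_optimal_general
    {S A : Type*} [Fintype S] [Fintype A] [Nonempty A]
    (P : S → A → S → ℝ) (hP0 : ∀ s a s', 0 ≤ P s a s')
    (hP1 : ∀ s a, ∑ s', P s a s' = 1)
    (r : S → A → ℝ) (γ : ℝ) (hγ0 : 0 < γ) (hγ1 : γ < 1)
    (vπ : S → ℝ)
    (hopt : ∀ s, vπ s = Finset.univ.sup' Finset.univ_nonempty
        (fun a => r s a + γ * ∑ s', P s a s' * vπ s')) :
    ∀ (σ : S → A) (vσ : S → ℝ),
      (∀ s, vσ s = r s (σ s) + γ * ∑ s', P s (σ s) s' * vσ s') →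
      ∀ s, vσ s ≤ vπ s := by
  intro σ vσ hσ
  refine le_of_subsolution_of_supersolution (fun s => hP0 s (σ s)) (fun s => hP1 s (σ s)) hγ0.le hγ1
    (c := fun s => r s (σ s)) (fun s => (hσ s).le) fun s => ?_
  rw [hopt s]
  exact le_sup' (fun a => r s a + γ * ∑ s', P s a s' * vπ s') (mem_univ (σ s))

/-- If the value function of `π` satisfies the Bellman optimality equation,
then `π` is optimal among all deterministic policies. -/
theorem bellman_optimal_implies_policy_optimal
    {S A : Type*} [Fintype S] [Nonempty S] [Fintype A] [Nonempty A]
    (P : S → A → S → ℝ) (hP0 : ∀ s a s', 0 ≤ P s a s')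
    (hP1 : ∀ s a, ∑ s', P s a s' = 1)
    (r : S → A → ℝ) (γ : ℝ) (hγ0 : 0 < γ) (hγ1 : γ < 1)
    (π : S → A) (vπ : S → ℝ)
    (hv : ∀ s, vπ s = r s (π s) + γ * ∑ s', P s (π s) s' * vπ s')
    (hopt : ∀ s, vπ s = Finset.univ.sup' Finset.univ_nonempty
        (fun a => r s a + γ * ∑ s', P s a s' * vπ s')) :
    ∀ (σ : S → A) (vσ : S → ℝ),
      (∀ s, vσ s = r s (σ s) + γ * ∑ s', P s (σ s) s' * vσ s') →
      ∀ s, vσ s ≤ vπ s :=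
  bellman_optimal_implies_policy_optimal_general P hP0 hP1 r γ hγ0 hγ1 vπ hopt
end

section
/- Let v* : S → ℝ be the unique solution of the Bellman optimality equation v* s = max_{a ∈ A} (r s a + γ * ∑_{s'} P s a s' * v* s'). Then v* dominates the value function of every deterministic policy: for every deterministic policy σ : S → A with value function v_σ and every state s ∈ S, v_σ s ≤ v* s. -/
/-! The difference `d = vσ - v*` satisfies `d ≤ γ P_σ d`, because `v*` is at least the
one-step lookahead value of the action `σ s`. Evaluating at a state where `d` is maximal,
with maximum `M`, gives `M ≤ γ M`, since a stochastic row averages `d` to at most `M`;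
as `γ < 1`, this forces `M ≤ 0`. -/

open Finset

theorem sum_mul_le_of_le {S : Type*} [Fintype S] (q d : S → ℝ) (hq0 : ∀ s, 0 ≤ q s)
    (hq1 : ∑ s, q s = 1) {M : ℝ} (hd : ∀ s, d s ≤ M) : ∑ s, q s * d s ≤ M :=
  calc ∑ s, q s * d s ≤ ∑ s, q s * M :=
        sum_le_sum fun s _ => mul_le_mul_of_nonneg_left (hd s) (hq0 s)
    _ = M := by rw [← sum_mul, hq1, one_mul]

theorem nonpos_of_le_discounted_average {S : Type*} [Fintype S] (Q : S → S → ℝ)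
    (hQ0 : ∀ s s', 0 ≤ Q s s') (hQ1 : ∀ s, ∑ s', Q s s' = 1) {γ : ℝ} (hγ0 : 0 ≤ γ)
    (hγ1 : γ < 1) (d : S → ℝ) (hd : ∀ s, d s ≤ γ * ∑ s', Q s s' * d s') (s : S) :
    d s ≤ 0 := by
  have : Nonempty S := ⟨s⟩
  obtain ⟨s₀, hs₀⟩ := Finite.exists_max d
  have hM : d s₀ ≤ γ * d s₀ :=
    (hd s₀).trans (mul_le_mul_of_nonneg_left
      (sum_mul_le_of_le (Q s₀) d (hQ0 s₀) (hQ1 s₀) hs₀) hγ0)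
  nlinarith [hs₀ s]

theorem optimal_value_dominates_general
    {S A : Type*} [Fintype S] [Fintype A] [Nonempty A]
    (P : S → A → S → ℝ) (hP0 : ∀ s a s', 0 ≤ P s a s')
    (hP1 : ∀ s a, ∑ s', P s a s' = 1)
    (r : S → A → ℝ) (γ : ℝ) (hγ0 : 0 < γ) (hγ1 : γ < 1)
    (vstar : S → ℝ)
    (hstar : ∀ s, vstar s = Finset.univ.sup' Finset.univ_nonempty
        (fun a => r s a + γ * ∑ s', P s a s' * vstar s')) :
    ∀ (σ : S → A) (vσ : S → ℝ),
      (∀ s, vσ s = r s (σ s) + γ * ∑ s', P s (σ s) s' * vσ s') →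
      ∀ s, vσ s ≤ vstar s := by
  intro σ vσ hσ
  have hlookahead : ∀ s a, r s a + γ * ∑ s', P s a s' * vstar s' ≤ vstar s := fun s a =>
    (hstar s).symm ▸ le_sup' (fun a => r s a + γ * ∑ s', P s a s' * vstar s') (mem_univ a)
  have hsub : ∀ s, vσ s - vstar s ≤ γ * ∑ s', P s (σ s) s' * (vσ s' - vstar s') := by
    intro s
    have hexp : γ * ∑ s', P s (σ s) s' * (vσ s' - vstar s') =
        γ * ∑ s', P s (σ s) s' * vσ s' - γ * ∑ s', P s (σ s) s' * vstar s' := by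
      simp only [mul_sub, sum_sub_distrib]
    linarith [hσ s, hlookahead s (σ s)]
  intro s
  linarith [nonpos_of_le_discounted_average (fun s => P s (σ s)) (fun s => hP0 s (σ s))
    (fun s => hP1 s (σ s)) hγ0.le hγ1 _ hsub s]

/-- The solution of the Bellman optimality equation dominates the value
function of every deterministic policy. -/
theorem optimal_value_dominates
    {S A : Type*} [Fintype S] [Nonempty S] [Fintype A] [Nonempty A]
    (P : S → A → S → ℝ) (hP0 : ∀ s a s', 0 ≤ P s a s')
    (hP1 : ∀ s a, ∑ s', P s a s' = 1)
    (r : S → A → ℝ) (γ : ℝ) (hγ0 : 0 < γ) (hγ1 : γ < 1)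
    (vstar : S → ℝ)
    (hstar : ∀ s, vstar s = Finset.univ.sup' Finset.univ_nonempty
        (fun a => r s a + γ * ∑ s', P s a s' * vstar s')) :
    ∀ (σ : S → A) (vσ : S → ℝ),
      (∀ s, vσ s = r s (σ s) + γ * ∑ s', P s (σ s) s' * vσ s') →
      ∀ s, vσ s ≤ vstar s :=
  optimal_value_dominates_general P hP0 hP1 r γ hγ0 hγ1 vstar hstar
end

section
/- Let v* : S → ℝ be the unique solution of the Bellman optimality equation v* s = max_{a ∈ A} (r s a + γ * ∑_{s'} P s a s' * v* s'), and let π* : S → A be any policy that is greedy with respect to v*, i.e., r s (π* s) + γ * ∑_{s'} P s (π* s) s' * v* s' = max_{a ∈ A} (r s a + γ * ∑_{s'} P s a s' * v* s') for all s. Then the value function of π* equals v*: v_{π*} s = v* s for all s ∈ S. -/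
/-!
Both `v*` and `v_{π*}` are fixed points of the policy evaluation operator
`v ↦ r_π + γ P_π v` of `π*`: for `v_{π*}` this is its definition, for `v*` it is the
Bellman optimality equation combined with greediness. Since `P_π` is stochastic, this
operator is a `γ`-contraction in the sup norm, so it has at most one fixed point.
-/

open Finset Function

section PolicyEvaluation

variable {S : Type*} [Fintype S]

def policyEvalOp (P : S → S → ℝ) (r : S → ℝ) (γ : ℝ) (v : S → ℝ) : S → ℝ :=
  fun s => r s + γ * ∑ s', P s s' * v s'

lemma abs_sum_mul_le_norm_of_stochastic {p : S → ℝ} (hp0 : ∀ s, 0 ≤ p s)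
    (hp1 : ∑ s, p s = 1) (w : S → ℝ) : |∑ s, p s * w s| ≤ ‖w‖ :=
  calc |∑ s, p s * w s| ≤ ∑ s, |p s * w s| := abs_sum_le_sum_abs _ _
    _ ≤ ∑ s, p s * ‖w‖ := by
        gcongr with s
        rw [abs_mul, abs_of_nonneg (hp0 s)]
        exact mul_le_mul_of_nonneg_left (norm_le_pi_norm w s) (hp0 s)
    _ = ‖w‖ := by rw [← sum_mul, hp1, one_mul]

lemma lipschitzWith_policyEvalOp {P : S → S → ℝ} (hP0 : ∀ s s', 0 ≤ P s s')
    (hP1 : ∀ s, ∑ s', P s s' = 1) (r : S → ℝ) {γ : ℝ} (hγ : 0 ≤ γ) :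
    LipschitzWith γ.toNNReal (policyEvalOp P r γ) := by
  refine LipschitzWith.of_dist_le_mul fun u v => ?_
  rw [Real.coe_toNNReal γ hγ]
  refine (dist_pi_le_iff (by positivity)).2 fun s => ?_
  have hdiff : policyEvalOp P r γ u s - policyEvalOp P r γ v s
      = γ * ∑ s', P s s' * (u - v) s' := by
    simp only [policyEvalOp, Pi.sub_apply, mul_sub, sum_sub_distrib]
    ring
  rw [Real.dist_eq, hdiff, abs_mul, abs_of_nonneg hγ, dist_eq_norm]
  exact mul_le_mul_of_nonneg_left (abs_sum_mul_le_norm_of_stochastic (hP0 s) (hP1 s) _) hγ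

lemma contractingWith_policyEvalOp {P : S → S → ℝ} (hP0 : ∀ s s', 0 ≤ P s s')
    (hP1 : ∀ s, ∑ s', P s s' = 1) (r : S → ℝ) {γ : ℝ} (hγ0 : 0 ≤ γ) (hγ1 : γ < 1) :
    ContractingWith γ.toNNReal (policyEvalOp P r γ) :=
  ⟨Real.toNNReal_lt_one.2 hγ1, lipschitzWith_policyEvalOp hP0 hP1 r hγ0⟩

end PolicyEvaluation

theorem greedy_policy_attains_optimal_value_general
    {S A : Type*} [Fintype S] [Fintype A] [Nonempty A]
    (P : S → A → S → ℝ) (hP0 : ∀ s a s', 0 ≤ P s a s')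
    (hP1 : ∀ s a, ∑ s', P s a s' = 1)
    (r : S → A → ℝ) (γ : ℝ) (hγ0 : 0 < γ) (hγ1 : γ < 1)
    (vstar : S → ℝ)
    (hstar : ∀ s, vstar s = Finset.univ.sup' Finset.univ_nonempty
        (fun a => r s a + γ * ∑ s', P s a s' * vstar s'))
    (πstar : S → A)
    (hgreedy : ∀ s, r s (πstar s) + γ * ∑ s', P s (πstar s) s' * vstar s'
        = Finset.univ.sup' Finset.univ_nonempty
            (fun a => r s a + γ * ∑ s', P s a s' * vstar s'))
    (vπ : S → ℝ)
    (hv : ∀ s, vπ s = r s (πstar s) + γ * ∑ s', P s (πstar s) s' * vπ s') :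
    ∀ s, vπ s = vstar s := by
  let T := policyEvalOp (fun s => P s (πstar s)) (fun s => r s (πstar s)) γ
  have hT : ContractingWith γ.toNNReal T :=
    contractingWith_policyEvalOp (fun s => hP0 s (πstar s)) (fun s => hP1 s (πstar s)) _
      hγ0.le hγ1
  have hvπ : IsFixedPt T vπ := funext fun s => (hv s).symm
  have hvstar : IsFixedPt T vstar := funext fun s => (hgreedy s).trans (hstar s).symm
  exact congrFun (hT.fixedPoint_unique' hvπ hvstar)

/-- A policy greedy with respect to the solution `v*` of the Bellman
optimality equation has value function equal to `v*`. -/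
theorem greedy_policy_attains_optimal_value
    {S A : Type*} [Fintype S] [Nonempty S] [Fintype A] [Nonempty A]
    (P : S → A → S → ℝ) (hP0 : ∀ s a s', 0 ≤ P s a s')
    (hP1 : ∀ s a, ∑ s', P s a s' = 1)
    (r : S → A → ℝ) (γ : ℝ) (hγ0 : 0 < γ) (hγ1 : γ < 1)
    (vstar : S → ℝ)
    (hstar : ∀ s, vstar s = Finset.univ.sup' Finset.univ_nonempty
        (fun a => r s a + γ * ∑ s', P s a s' * vstar s'))
    (πstar : S → A)
    (hgreedy : ∀ s, r s (πstar s) + γ * ∑ s', P s (πstar s) s' * vstar s'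
        = Finset.univ.sup' Finset.univ_nonempty
            (fun a => r s a + γ * ∑ s', P s a s' * vstar s'))
    (vπ : S → ℝ)
    (hv : ∀ s, vπ s = r s (πstar s) + γ * ∑ s', P s (πstar s) s' * vπ s') :
    ∀ s, vπ s = vstar s :=
  greedy_policy_attains_optimal_value_general P hP0 hP1 r γ hγ0 hγ1 vstar hstar πstar hgreedy vπ hv
end

section
/- (Geometric convergence of value iteration.) Let v* : S → ℝ be the unique solution of the Bellman optimality equation v* = T* v*, where (T* v) s = max_{a ∈ A} (r s a + γ * ∑_{s'} P s a s' * v s'). Then for every starting function v : S → ℝ and every n ∈ ℕ, dist (T*^[n] v) v* ≤ γ^n * dist v v*, where T*^[n] denotes the n-fold iterate and dist is the supremum distance on S → ℝ. -/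
/-!
The Bellman optimality operator is a `γ`-contraction for the supremum distance: averaging
against a probability vector is `1`-Lipschitz, scaling by `γ` multiplies the Lipschitz constant
by `γ`, and a finite maximum and a finite product of `γ`-Lipschitz maps are again `γ`-Lipschitz.
Since `v*` is a fixed point, `dist (T^[n] v) v* = dist (T^[n] v) (T^[n] v*) ≤ γ ^ n * dist v v*`.
-/

open Finset NNReal

namespace LipschitzWith

variable {α : Type*} [PseudoEMetricSpace α] {K : ℝ≥0}

lemma finset_sup' {ι : Type*} {s : Finset ι} (hs : s.Nonempty) {f : ι → α → ℝ}
    (hf : ∀ i ∈ s, LipschitzWith K (f i)) :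
    LipschitzWith K fun x => s.sup' hs (f · x) := by
  induction hs using Finset.Nonempty.cons_induction with
  | singleton i => simpa using hf i (mem_singleton_self i)
  | cons i s hi hs ih =>
    have hmax := (hf i (mem_cons_self i s)).max (ih fun j hj => hf j (mem_cons_of_mem hj))
    rw [max_self] at hmax
    convert hmax using 2 with x
    exact sup'_cons hs (f · x)

lemma of_forall_eval {ι : Type*} [Fintype ι] {β : ι → Type*} [∀ i, PseudoEMetricSpace (β i)]
    {f : α → ∀ i, β i} (hf : ∀ i, LipschitzWith K fun x => f x i) : LipschitzWith K f :=
  fun x y => edist_pi_le_iff.2 fun i => hf i x y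

end LipschitzWith

lemma lipschitzWith_const_add_mul {α : Type*} [PseudoMetricSpace α] {K : ℝ≥0} {g : α → ℝ}
    (hg : LipschitzWith K g) (c : ℝ) {γ : ℝ} (hγ : 0 ≤ γ) :
    LipschitzWith (Real.toNNReal γ * K) fun x => c + γ * g x :=
  LipschitzWith.of_dist_le_mul fun x y => by
    have hdist : dist (c + γ * g x) (c + γ * g y) = γ * dist (g x) (g y) := by
      rw [Real.dist_eq, Real.dist_eq, add_sub_add_left_eq_sub, ← mul_sub, abs_mul, abs_of_nonneg hγ]
    rw [hdist, NNReal.coe_mul, Real.coe_toNNReal γ hγ, mul_assoc]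
    exact mul_le_mul_of_nonneg_left (hg.dist_le_mul x y) hγ

lemma lipschitzWith_one_sum_mul {S : Type*} [Fintype S] {p : S → ℝ} (hp0 : ∀ s, 0 ≤ p s)
    (hp1 : ∑ s, p s = 1) : LipschitzWith 1 fun w : S → ℝ => ∑ s, p s * w s :=
  LipschitzWith.of_dist_le_mul fun u w =>
    calc dist (∑ s, p s * u s) (∑ s, p s * w s) = |∑ s, p s * (u s - w s)| := by
          simp only [Real.dist_eq, ← sum_sub_distrib, mul_sub]
      _ ≤ ∑ s, p s * |u s - w s| := by
          refine (abs_sum_le_sum_abs _ _).trans_eq (sum_congr rfl fun s _ => ?_)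
          rw [abs_mul, abs_of_nonneg (hp0 s)]
      _ ≤ ∑ s, p s * dist u w :=
          sum_le_sum fun s _ => mul_le_mul_of_nonneg_left (dist_le_pi_dist u w s) (hp0 s)
      _ = ↑(1 : ℝ≥0) * dist u w := by rw [← sum_mul, hp1, NNReal.coe_one]

section Bellman

variable {S A : Type*} [Fintype S] [Fintype A] [Nonempty A]

noncomputable def bellmanOptimalityOp (P : S → A → S → ℝ) (r : S → A → ℝ) (γ : ℝ)
    (w : S → ℝ) : S → ℝ :=
  fun s => univ.sup' univ_nonempty fun a => r s a + γ * ∑ s', P s a s' * w s'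

lemma lipschitzWith_bellmanOptimalityOp {P : S → A → S → ℝ} (hP0 : ∀ s a s', 0 ≤ P s a s')
    (hP1 : ∀ s a, ∑ s', P s a s' = 1) (r : S → A → ℝ) {γ : ℝ} (hγ : 0 ≤ γ) :
    LipschitzWith (Real.toNNReal γ) (bellmanOptimalityOp P r γ) :=
  LipschitzWith.of_forall_eval fun s =>
    LipschitzWith.finset_sup' univ_nonempty fun a _ => by
      simpa using lipschitzWith_const_add_mul
        (lipschitzWith_one_sum_mul (hP0 s a) (hP1 s a)) (r s a) hγ

end Bellman

theorem value_iteration_geometric_convergence_general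
    {S A : Type*} [Fintype S] [Fintype A] [Nonempty A]
    (P : S → A → S → ℝ) (hP0 : ∀ s a s', 0 ≤ P s a s')
    (hP1 : ∀ s a, ∑ s', P s a s' = 1)
    (r : S → A → ℝ) (γ : ℝ) (hγ0 : 0 < γ)
    (vstar : S → ℝ)
    (hstar : ∀ s, vstar s = Finset.univ.sup' Finset.univ_nonempty
        (fun a => r s a + γ * ∑ s', P s a s' * vstar s'))
    (v : S → ℝ) (n : ℕ) :
    dist ((fun (w : S → ℝ) (s : S) =>
            Finset.univ.sup' Finset.univ_nonempty
              (fun a => r s a + γ * ∑ s', P s a s' * w s'))^[n] v) vstar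
      ≤ γ ^ n * dist v vstar := by
  change dist ((bellmanOptimalityOp P r γ)^[n] v) vstar ≤ γ ^ n * dist v vstar
  have hfix : Function.IsFixedPt (bellmanOptimalityOp P r γ) vstar :=
    funext fun s => (hstar s).symm
  calc dist ((bellmanOptimalityOp P r γ)^[n] v) vstar
      = dist ((bellmanOptimalityOp P r γ)^[n] v) ((bellmanOptimalityOp P r γ)^[n] vstar) := by
        rw [(hfix.iterate n).eq]
    _ ≤ ↑(Real.toNNReal γ ^ n) * dist v vstar :=
        ((lipschitzWith_bellmanOptimalityOp hP0 hP1 r hγ0.le).iterate n).dist_le_mul v vstar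
    _ = γ ^ n * dist v vstar := by rw [NNReal.coe_pow, Real.coe_toNNReal γ hγ0.le]

/-- Geometric convergence of value iteration:
`dist (T*^[n] v) v* ≤ γ ^ n * dist v v*`. -/
theorem value_iteration_geometric_convergence
    {S A : Type*} [Fintype S] [Nonempty S] [Fintype A] [Nonempty A]
    (P : S → A → S → ℝ) (hP0 : ∀ s a s', 0 ≤ P s a s')
    (hP1 : ∀ s a, ∑ s', P s a s' = 1)
    (r : S → A → ℝ) (γ : ℝ) (hγ0 : 0 < γ) (hγ1 : γ < 1)
    (vstar : S → ℝ)
    (hstar : ∀ s, vstar s = Finset.univ.sup' Finset.univ_nonempty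
        (fun a => r s a + γ * ∑ s', P s a s' * vstar s'))
    (v : S → ℝ) (n : ℕ) :
    dist ((fun (w : S → ℝ) (s : S) =>
            Finset.univ.sup' Finset.univ_nonempty
              (fun a => r s a + γ * ∑ s', P s a s' * w s'))^[n] v) vstar
      ≤ γ ^ n * dist v vstar :=
  value_iteration_geometric_convergence_general P hP0 hP1 r γ hγ0 vstar hstar v n
end
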